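/- arXiv:1407.4913 — 3 statements merged into one kernel-verified Lean document; each statement's English description precedes it below -/
import Mathlib

section
/- Let ψ be a branching mechanism of Lévy–Khintchine form with ψ(1) > 0. Then 1 ≤ δ ≤ γ ≤ η ≤ 2, where δ, γ, η are the lower, Blumenthal–Getoor lower and upper exponents of ψ at infinity. -/
open MeasureTheory Filter Set

noncomputable section

/-- The branching mechanism `ψ(λ) = αλ + βλ² + ∫_{(0,∞)} (e^{−λr} − 1 + λr) π(dr)`. -/
def psiFun (α β : ℝ) (π : Measure ℝ) : ℝ → ℝ := fun l =>
  α * l + β * l ^ 2 + ∫ r, (Real.exp (-(l * r)) - 1 + l * r) ∂π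

/-- `ψ′(λ) = α + 2βλ + ∫_{(0,∞)} r(1 − e^{−λr}) π(dr)`. -/
def psiDeriv (α β : ℝ) (π : Measure ℝ) : ℝ → ℝ := fun l =>
  α + 2 * β * l + ∫ r, r * (1 - Real.exp (-(l * r))) ∂π

/-- `(α, β, π)` is the datum of a (sub)critical branching mechanism of
Lévy–Khintchine form: `α, β ≥ 0`, `π` is a Borel measure carried by `(0,∞)`
with `∫ min(r, r²) π(dr) < ∞`. -/
structure IsBranchingMechanism (α β : ℝ) (π : Measure ℝ) : Prop where
  alpha_nonneg : 0 ≤ α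
  beta_nonneg : 0 ≤ β
  carried_on_pos : π (Set.Iic 0) = 0
  integ_min : Integrable (fun r => min r (r ^ 2)) π

/-- The lower index `γ_f = sup {c ≥ 0 : f(λ)λ^{−c} → ∞}` (with `sup ∅ = 0`). -/
def lowerIndex (f : ℝ → ℝ) : ℝ :=
  sSup {c : ℝ | 0 ≤ c ∧ Tendsto (fun l : ℝ => f l * l ^ (-c)) atTop atTop}

/-- The upper index `η_f = inf {c ≥ 0 : f(λ)λ^{−c} → 0}`. -/
def upperIndex (f : ℝ → ℝ) : ℝ :=
  sInf {c : ℝ | 0 ≤ c ∧ Tendsto (fun l : ℝ => f l * l ^ (-c)) atTop (nhds 0)}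

/-- `δ_f = sup {c ≥ 0 : ∃ C > 0, ∀ 1 ≤ μ ≤ λ, C f(μ)μ^{−c} ≤ f(λ)λ^{−c}}`. -/
def deltaIndex (f : ℝ → ℝ) : ℝ :=
  sSup {c : ℝ | 0 ≤ c ∧ ∃ C : ℝ, 0 < C ∧
    ∀ μ l : ℝ, 1 ≤ μ → μ ≤ l → C * (f μ * μ ^ (-c)) ≤ f l * l ^ (-c)}

/-! ### Pointwise elementary inequalities -/

lemma h_nonneg (x : ℝ) : 0 ≤ Real.exp (-x) - 1 + x := by
  nlinarith [Real.add_one_le_exp (-x)]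

lemma h_le_lin {x : ℝ} (hx : 0 ≤ x) : Real.exp (-x) - 1 + x ≤ x := by
  nlinarith [Real.exp_nonneg (-x), Real.exp_le_one_iff.mpr (neg_nonpos_of_nonneg hx)]

lemma h_le_sq {x : ℝ} (hx : 0 ≤ x) : Real.exp (-x) - 1 + x ≤ x ^ 2 := by
  have h3 : Real.exp (-x) * Real.exp x = 1 := by rw [← Real.exp_add]; simp
  have hA : Real.exp (-x) * (1 + x) ≤ 1 := by
    calc Real.exp (-x) * (1 + x) ≤ Real.exp (-x) * Real.exp x :=
          mul_le_mul_of_nonneg_left (by linarith [Real.add_one_le_exp x]) (Real.exp_nonneg _)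
      _ = 1 := h3
  have hB : 1 - x ≤ Real.exp (-x) := by linarith [Real.add_one_le_exp (-x)]
  nlinarith [hA, hB, mul_nonneg hx hx]

lemma h_mono {x y : ℝ} (hx : 0 < x) (hxy : x ≤ y) :
    y * (Real.exp (-x) - 1 + x) ≤ x * (Real.exp (-y) - 1 + y) := by
  have ht : 0 ≤ y - x := by linarith
  have hsplit : Real.exp (-y) = Real.exp (-x) * Real.exp (-(y - x)) := by
    rw [← Real.exp_add]; ring_nf
  have h1 : 1 - (y - x) ≤ Real.exp (-(y - x)) := by linarith [Real.add_one_le_exp (-(y-x))]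
  have h3 : Real.exp (-x) * Real.exp x = 1 := by rw [← Real.exp_add]; simp
  have h4 : 0 < Real.exp (-x) := Real.exp_pos _
  have hA : Real.exp (-x) * (1 + x) ≤ 1 := by
    calc Real.exp (-x) * (1 + x) ≤ Real.exp (-x) * Real.exp x :=
          mul_le_mul_of_nonneg_left (by linarith [Real.add_one_le_exp x]) (Real.exp_nonneg _)
      _ = 1 := h3
  rw [hsplit]
  have key : (y - x) * (Real.exp (-x) - 1) ≤ x * Real.exp (-x) * (Real.exp (-(y-x)) - 1) := by
    have step1 : x * Real.exp (-x) * (Real.exp (-(y-x)) - 1) ≥ x * Real.exp (-x) * (-(y-x)) := by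
      apply mul_le_mul_of_nonneg_left (by linarith) (by positivity)
    have step2 : (y - x) * (Real.exp (-x) - 1) ≤ x * Real.exp (-x) * (-(y-x)) := by
      nlinarith [mul_nonneg ht (sub_nonneg.mpr hA)]
    linarith
  nlinarith [key]

/-! ### Properties of `psiFun` -/

section psi
variable {α β : ℝ} {π : Measure ℝ}

lemma ae_pos (h : IsBranchingMechanism α β π) : ∀ᵐ r ∂π, 0 < r := by
  have : {r : ℝ | ¬ 0 < r} = Set.Iic 0 := by ext r; simp
  rw [MeasureTheory.ae_iff, this, h.carried_on_pos]

lemma h_bound {l r : ℝ} (hl : 0 ≤ l) (hr : 0 < r) :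
    Real.exp (-(l * r)) - 1 + l * r ≤ max l (l ^ 2) * min r (r ^ 2) := by
  have hlr : 0 ≤ l * r := mul_nonneg hl hr.le
  rcases le_or_gt 1 r with h1 | h1
  · have : min r (r ^ 2) = r := min_eq_left (by nlinarith)
    rw [this]
    calc Real.exp (-(l * r)) - 1 + l * r ≤ l * r := h_le_lin hlr
      _ ≤ max l (l ^ 2) * r := mul_le_mul_of_nonneg_right (le_max_left _ _) hr.le
  · have : min r (r ^ 2) = r ^ 2 := min_eq_right (by nlinarith)
    rw [this]
    calc Real.exp (-(l * r)) - 1 + l * r ≤ (l * r) ^ 2 := h_le_sq hlr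
      _ = l ^ 2 * r ^ 2 := by ring
      _ ≤ max l (l ^ 2) * r ^ 2 := mul_le_mul_of_nonneg_right (le_max_right _ _) (sq_nonneg r)

lemma integrable_h (h : IsBranchingMechanism α β π) {l : ℝ} (hl : 0 ≤ l) :
    Integrable (fun r => Real.exp (-(l * r)) - 1 + l * r) π := by
  apply Integrable.mono' (h.integ_min.const_mul (max l (l ^ 2)))
  · exact (Continuous.aestronglyMeasurable (by continuity))
  · filter_upwards [ae_pos h] with r hr
    rw [Real.norm_eq_abs, abs_of_nonneg (h_nonneg _)]
    exact h_bound hl hr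

lemma psi_nonneg (h : IsBranchingMechanism α β π) {l : ℝ} (hl : 0 ≤ l) :
    0 ≤ psiFun α β π l := by
  have : 0 ≤ ∫ r, (Real.exp (-(l * r)) - 1 + l * r) ∂π :=
    integral_nonneg fun r => h_nonneg _
  have := h.alpha_nonneg; have := h.beta_nonneg
  unfold psiFun; positivity

lemma psi_mono (h : IsBranchingMechanism α β π) {μ l : ℝ} (hμ : 1 ≤ μ) (hμl : μ ≤ l) :
    l * psiFun α β π μ ≤ μ * psiFun α β π l := by
  have hμ0 : (0:ℝ) < μ := by linarith
  have hl0 : (0:ℝ) < l := by linarith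
  have hint : l * ∫ r, (Real.exp (-(μ * r)) - 1 + μ * r) ∂π
      ≤ μ * ∫ r, (Real.exp (-(l * r)) - 1 + l * r) ∂π := by
    rw [← integral_const_mul, ← integral_const_mul]
    apply integral_mono_ae ((integrable_h h hμ0.le).const_mul l)
      ((integrable_h h hl0.le).const_mul μ)
    filter_upwards [ae_pos h] with r hr
    have := h_mono (mul_pos hμ0 hr) (mul_le_mul_of_nonneg_right hμl hr.le)
    nlinarith [this, hr]
  have hI : 0 ≤ ∫ r, (Real.exp (-(l * r)) - 1 + l * r) ∂π :=
    integral_nonneg fun r => h_nonneg _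
  unfold psiFun
  have hα := h.alpha_nonneg; have hβ := h.beta_nonneg
  nlinarith [hint, mul_nonneg hβ (mul_nonneg hμ0.le (mul_nonneg hl0.le (sub_nonneg.mpr hμl)))]

lemma M_nonneg (h : IsBranchingMechanism α β π) : 0 ≤ ∫ r, min r (r ^ 2) ∂π := by
  apply integral_nonneg_of_ae
  filter_upwards [ae_pos h] with r hr
  positivity

lemma psi_upper (h : IsBranchingMechanism α β π) {l : ℝ} (hl : 1 ≤ l) :
    psiFun α β π l ≤ (α + β + ∫ r, min r (r ^ 2) ∂π + 1) * l ^ 2 := by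
  have hl0 : (0:ℝ) < l := by linarith
  have hmax : max l (l ^ 2) = l ^ 2 := max_eq_right (by nlinarith)
  have hint : (∫ r, (Real.exp (-(l * r)) - 1 + l * r) ∂π)
      ≤ l ^ 2 * ∫ r, min r (r ^ 2) ∂π := by
    rw [← integral_const_mul]
    apply integral_mono_ae (integrable_h h hl0.le) (h.integ_min.const_mul _)
    filter_upwards [ae_pos h] with r hr
    simpa [hmax] using h_bound hl0.le hr
  have hM := M_nonneg h
  unfold psiFun
  nlinarith [hint, hM, sq_nonneg l, mul_nonneg h.alpha_nonneg (by nlinarith : (0:ℝ) ≤ l ^ 2 - l)]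

end psi

/-! ### Index sets for an abstract function -/

section idx
variable (f : ℝ → ℝ) (K : ℝ)

def Sgam (f : ℝ → ℝ) := {c : ℝ | 0 ≤ c ∧ Tendsto (fun l : ℝ => f l * l ^ (-c)) atTop atTop}
def Seta (f : ℝ → ℝ) := {c : ℝ | 0 ≤ c ∧ Tendsto (fun l : ℝ => f l * l ^ (-c)) atTop (nhds 0)}
def Sdel (f : ℝ → ℝ) := {c : ℝ | 0 ≤ c ∧ ∃ C : ℝ, 0 < C ∧
    ∀ μ l : ℝ, 1 ≤ μ → μ ≤ l → C * (f μ * μ ^ (-c)) ≤ f l * l ^ (-c)}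

variable (hub : ∀ l : ℝ, 1 ≤ l → f l ≤ K * l ^ 2)
  (hnn : ∀ l : ℝ, 1 ≤ l → 0 ≤ f l)
  (hf1 : 0 < f 1)
  (hgrow : ∀ l : ℝ, 1 ≤ l → f 1 * l ≤ f l)
  (hmono : ∀ μ l : ℝ, 1 ≤ μ → μ ≤ l → l * f μ ≤ μ * f l)

lemma not_both {g : ℝ → ℝ} (h1 : Tendsto g atTop atTop) (h2 : Tendsto g atTop (nhds 0)) :
    False := by
  have e1 : ∀ᶠ l in atTop, (1:ℝ) ≤ g l := h1.eventually_ge_atTop 1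
  have e2 : ∀ᶠ l in atTop, g l < 1 := h2.eventually (gt_mem_nhds (by norm_num))
  obtain ⟨l, hl1, hl2⟩ := (e1.and e2).exists
  linarith

lemma rpow_split {l c c' : ℝ} (hl : 0 < l) : l ^ (-c') = l ^ (-c) * l ^ (c - c') := by
  rw [← Real.rpow_add hl]; ring_nf

include hnn hub in
lemma tend0 {c : ℝ} (hc : 2 < c) :
    Tendsto (fun l : ℝ => f l * l ^ (-c)) atTop (nhds 0) := by
  have hbase : Tendsto (fun l : ℝ => K * l ^ (2 - c)) atTop (nhds 0) := by
    have := tendsto_rpow_neg_atTop (y := c - 2) (by linarith)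
    have h2 : Tendsto (fun l : ℝ => K * l ^ (-(c-2))) atTop (nhds (K * 0)) :=
      this.const_mul K
    simpa [show -(c-2) = 2 - c by ring] using h2
  apply squeeze_zero' ?_ ?_ hbase
  · filter_upwards [eventually_ge_atTop (1:ℝ)] with l hl
    have hl0 : (0:ℝ) < l := by linarith
    exact mul_nonneg (hnn l hl) (Real.rpow_nonneg hl0.le _)
  · filter_upwards [eventually_ge_atTop (1:ℝ)] with l hl
    have hl0 : (0:ℝ) < l := by linarith
    have h1 : f l * l ^ (-c) ≤ (K * l ^ 2) * l ^ (-c) :=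
      mul_le_mul_of_nonneg_right (hub l hl) (Real.rpow_nonneg hl0.le _)
    have h2 : (K * l ^ 2) * l ^ (-c) = K * l ^ (2 - c) := by
      rw [show (l:ℝ) ^ 2 = l ^ (2:ℝ) by rw [← Real.rpow_natCast l 2]; norm_num,
        mul_assoc, ← Real.rpow_add hl0]
      ring_nf
    linarith [h1, h2.le, h2.ge]

include hf1 hgrow in
lemma zero_mem_Sgam : (0:ℝ) ∈ Sgam f := by
  refine ⟨le_refl _, ?_⟩
  simp only [neg_zero, Real.rpow_zero, mul_one]
  refine tendsto_atTop_mono' atTop ?_ (Tendsto.const_mul_atTop hf1 tendsto_id)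
  filter_upwards [eventually_ge_atTop (1:ℝ)] with l hl using hgrow l hl

include hmono in
lemma one_mem_Sdel : (1:ℝ) ∈ Sdel f := by
  refine ⟨by norm_num, 1, one_pos, fun μ l hμ hμl => ?_⟩
  have hμ0 : (0:ℝ) < μ := by linarith
  have hl0 : (0:ℝ) < l := by linarith
  rw [one_mul, Real.rpow_neg_one, Real.rpow_neg_one, ← div_eq_mul_inv, ← div_eq_mul_inv,
    div_le_div_iff₀ hμ0 hl0]
  nlinarith [hmono μ l hμ hμl]

include hf1 in
lemma del_to_gam {c c' : ℝ} (hc : c ∈ Sdel f) (hc'0 : 0 ≤ c') (hc'c : c' < c) :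
    c' ∈ Sgam f := by
  obtain ⟨hc0, C, hC, hCle⟩ := hc
  refine ⟨hc'0, ?_⟩
  refine tendsto_atTop_mono' atTop ?_
    (Tendsto.const_mul_atTop (mul_pos hC hf1) (tendsto_rpow_atTop (by linarith : 0 < c - c')))
  filter_upwards [eventually_ge_atTop (1:ℝ)] with l hl
  have hl0 : (0:ℝ) < l := by linarith
  have h1 : C * (f 1 * (1:ℝ) ^ (-c)) ≤ f l * l ^ (-c) := hCle 1 l le_rfl hl
  rw [Real.one_rpow, mul_one] at h1
  have h2 : (C * f 1) * l ^ (c - c') ≤ (f l * l ^ (-c)) * l ^ (c - c') :=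
    mul_le_mul_of_nonneg_right h1 (Real.rpow_nonneg hl0.le _)
  calc C * f 1 * l ^ (c - c') ≤ (f l * l ^ (-c)) * l ^ (c - c') := h2
    _ = f l * l ^ (-c') := by rw [mul_assoc, ← rpow_split hl0]

include hub hnn in
lemma Sgam_bdd : ∀ c ∈ Sgam f, c ≤ 2 := by
  intro c hc
  by_contra hgt
  push_neg at hgt
  exact not_both hc.2 (tend0 f K hub hnn hgt)

include hub hnn hf1 in
lemma Sdel_bdd : ∀ c ∈ Sdel f, c ≤ 2 := by
  intro c hc
  by_contra hgt
  push_neg at hgt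
  obtain ⟨hc0, C, hC, hCle⟩ := hc
  have h0 := tend0 f K hub hnn hgt
  have e2 : ∀ᶠ l in atTop, f l * l ^ (-c) < C * f 1 :=
    h0.eventually (gt_mem_nhds (mul_pos hC hf1))
  obtain ⟨l, hl1, hl2⟩ := ((eventually_ge_atTop (1:ℝ)).and e2).exists
  have h1 : C * (f 1 * (1:ℝ) ^ (-c)) ≤ f l * l ^ (-c) := hCle 1 l le_rfl hl1
  rw [Real.one_rpow, mul_one] at h1
  linarith

include hnn in
lemma gam_le_eta_mem {c c' : ℝ} (hc : c ∈ Sgam f) (hc' : c' ∈ Seta f) : c ≤ c' := by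
  by_contra hgt
  push_neg at hgt
  apply not_both (g := fun l : ℝ => f l * l ^ (-c'))
  · refine tendsto_atTop_mono' atTop ?_ hc.2
    filter_upwards [eventually_ge_atTop (1:ℝ)] with l hl
    have hl0 : (0:ℝ) < l := by linarith
    have hpow : (1:ℝ) ≤ l ^ (c - c') := Real.one_le_rpow hl (by linarith [hc'.1])
    calc f l * l ^ (-c) = f l * l ^ (-c) * 1 := by ring
      _ ≤ f l * l ^ (-c) * l ^ (c - c') := by
          apply mul_le_mul_of_nonneg_left hpow
          exact mul_nonneg (hnn l hl) (Real.rpow_nonneg hl0.le _)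
      _ = f l * l ^ (-c') := by rw [mul_assoc, ← rpow_split hl0]
  · exact hc'.2

end idx

/-- if ψ(1) > 0 then 1 ≤ δ ≤ γ ≤ η ≤ 2. -/
theorem statement3 (α β : ℝ) (π : Measure ℝ) (h : IsBranchingMechanism α β π)
    (hpos : 0 < psiFun α β π 1) :
    1 ≤ deltaIndex (psiFun α β π) ∧
    deltaIndex (psiFun α β π) ≤ lowerIndex (psiFun α β π) ∧
    lowerIndex (psiFun α β π) ≤ upperIndex (psiFun α β π) ∧
    upperIndex (psiFun α β π) ≤ 2 := by
  set f := psiFun α β π with hf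
  set K := α + β + (∫ r, min r (r ^ 2) ∂π) + 1 with hKdef
  have hub : ∀ l : ℝ, 1 ≤ l → f l ≤ K * l ^ 2 := fun l hl => psi_upper h hl
  have hnn : ∀ l : ℝ, 1 ≤ l → 0 ≤ f l := fun l hl => psi_nonneg h (by linarith)
  have hgrow : ∀ l : ℝ, 1 ≤ l → f 1 * l ≤ f l := by
    intro l hl
    have := psi_mono h le_rfl hl
    rw [one_mul] at this
    linarith [this]
  have hmono : ∀ μ l : ℝ, 1 ≤ μ → μ ≤ l → l * f μ ≤ μ * f l :=
    fun μ l hμ hμl => psi_mono h hμ hμl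
  have hdel : deltaIndex f = sSup (Sdel f) := rfl
  have hgam : lowerIndex f = sSup (Sgam f) := rfl
  have heta : upperIndex f = sInf (Seta f) := rfl
  have hδbdd : BddAbove (Sdel f) := ⟨2, fun c hc => Sdel_bdd f K hub hnn hpos c hc⟩
  have hγbdd : BddAbove (Sgam f) := ⟨2, fun c hc => Sgam_bdd f K hub hnn c hc⟩
  have hηbdd : BddBelow (Seta f) := ⟨0, fun c hc => hc.1⟩
  have hηne : (Seta f).Nonempty := ⟨3, by norm_num, tend0 f K hub hnn (by norm_num)⟩
  have h1mem : (1:ℝ) ∈ Sdel f := one_mem_Sdel f hmono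
  have h0mem : (0:ℝ) ∈ Sgam f := zero_mem_Sgam f hpos hgrow
  refine ⟨?_, ?_, ?_, ?_⟩
  · rw [hdel]; exact le_csSup hδbdd h1mem
  · rw [hdel, hgam]
    refine csSup_le ⟨1, h1mem⟩ fun c hc => ?_
    have hγ0 : 0 ≤ sSup (Sgam f) := le_csSup hγbdd h0mem
    by_contra hlt
    push_neg at hlt
    have hc' : (sSup (Sgam f) + c) / 2 ∈ Sgam f :=
      del_to_gam f hpos hc (by linarith) (by linarith)
    linarith [le_csSup hγbdd hc']
  · rw [hgam, heta]
    exact csSup_le ⟨0, h0mem⟩ fun c hc =>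
      le_csInf hηne fun c' hc' => gam_le_eta_mem f hnn hc hc'
  · rw [heta]
    by_contra hlt
    push_neg at hlt
    have hc : (2 + sInf (Seta f)) / 2 ∈ Seta f :=
      ⟨by linarith, tend0 f K hub hnn (by linarith)⟩
    linarith [csInf_le hηbdd hc]
end
end

section
/- Let ψ be a branching mechanism of Lévy–Khintchine form with δ > 1, let d be an integer with d > 2γ/(γ−1), and fix K ∈ (0,∞). Then there exist a sequence (ρ_n)_{n≥1} of reals in (0, (K/ψ′(1))^{1/2}) and a constant C ∈ (0,∞), depending only on d, ψ and K, such that for all n ≥ 1: ρ_{n+1} ≤ e^{−n}·ρ_n, sup_{n≥1} n^{−2}·log(1/ρ_n) < ∞, and J(ρ_n) ≤ C. -/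
open MeasureTheory Filter Set

noncomputable section

/-- `J(r) = r² q_r^{2/(d−2)} ∫_1^{q_r} ψ′(v) v^{−d/(d−2)} dv`
where `q_r = ψ′^{−1}(K·r^{−2})`. -/
def Jfun (α β : ℝ) (π : Measure ℝ) (ψ'inv : ℝ → ℝ) (K : ℝ) (d : ℕ) (r : ℝ) : ℝ :=
  r ^ 2 * ψ'inv (K / r ^ 2) ^ ((2 : ℝ) / ((d : ℝ) - 2)) *
    ∫ v in (1 : ℝ)..ψ'inv (K / r ^ 2), psiDeriv α β π v * v ^ (-(d : ℝ) / ((d : ℝ) - 2))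

/-!
Write `F = ψ′` and `p = d/(d-2)`. Since `δ > 1`, `ψ` is not identically zero and grows faster
than `λ^c` for some `c > 1`, so `γ > 1` and the hypothesis on `d` reads `1 < p < γ`; fix
`p - 1 < a < a' < γ - 1`, so that `F(v) ≥ v^{a'}` for large `v`.

Call `q ≥ 1` a record point if `F(v) v^{-a} ≤ F(q) q^{-a}` for `v ∈ [1, q]`. At a record point,
`∫_1^q F(v) v^{-p} dv ≤ F(q) q^{1-p} / (a + 1 - p)`, so the radius `ρ` with `K/ρ² = F(q)`, for which
`q_ρ = q`, has `J(ρ) ≤ K / (a + 1 - p)`. The radii are taken at record points `q_n` with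
`F(q_{n+1}) ≥ e^{2(n+1)} F(q_n)` and `F(q_{n+1}) q_{n+1}^{-a} ≤ e^{2(n+1)} F(q_n) q_n^{-a}`.
Telescoping the second inequality and using `F(q) ≥ q^{a'}` with `a < a'` gives
`log F(q_n) = O(n²)`, that is `log(1/ρ_n) = O(n²)`.
-/

open Real (exp log)

lemma exp_neg_sub_one_add_nonneg (x : ℝ) : 0 ≤ exp (-x) - 1 + x := by
  linarith [Real.add_one_le_exp (-x)]

lemma exp_neg_sub_one_add_le (x : ℝ) : exp (-x) - 1 + x ≤ x * (1 - exp (-x)) := by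
  have h := mul_le_mul_of_nonneg_right (Real.add_one_le_exp x) (Real.exp_pos (-x)).le
  rw [← Real.exp_add, add_neg_cancel, Real.exp_zero] at h
  linarith

lemma mul_one_sub_exp_neg_nonneg {r v : ℝ} (hr : 0 ≤ r) (hv : 0 ≤ v) :
    0 ≤ r * (1 - exp (-(v * r))) :=
  mul_nonneg hr (by simpa using Real.exp_le_one_iff.2 (neg_nonpos.2 (mul_nonneg hv hr)))

lemma mul_one_sub_exp_neg_le {r v : ℝ} (hr : 0 < r) (hv : 0 ≤ v) :
    r * (1 - exp (-(v * r))) ≤ (v + 1) * min r (r ^ 2) := by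
  rcases le_total r 1 with hr1 | hr1
  · rw [min_eq_right (by nlinarith)]
    nlinarith [Real.one_sub_le_exp_neg (v * r)]
  · rw [min_eq_left (by nlinarith)]
    nlinarith [Real.exp_pos (-(v * r))]

lemma Real.nonempty_of_nonneg_lt_sSup {s : Set ℝ} {c : ℝ} (hc : 0 ≤ c) (hs : c < sSup s) :
    s.Nonempty :=
  nonempty_iff_ne_empty.2 fun h => by rw [h, Real.sSup_empty] at hs; linarith

theorem deltaIndex_zero : deltaIndex (fun _ => 0) = 0 := by
  -- the defining set is `[0, ∞)`, unbounded, so its `sSup` is the junk value `0`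
  refine Real.sSup_of_not_bddAbove fun ⟨M, hM⟩ => ?_
  have := hM ⟨le_max_right M 0 |>.trans (le_add_of_nonneg_right zero_le_one),
    1, one_pos, fun μ l _ _ => by simp⟩
  linarith [le_max_left M 0]

theorem exists_rpow_le_of_one_lt_deltaIndex {f : ℝ → ℝ} (hf : 1 < deltaIndex f) :
    ∃ c : ℝ, 1 < c ∧ ∃ C : ℝ, 0 < C ∧ ∀ l, 1 ≤ l → C * f 1 * l ^ c ≤ f l := by
  obtain ⟨c, ⟨-, C, hC, hfC⟩, hc⟩ :=
    exists_lt_of_lt_csSup (Real.nonempty_of_nonneg_lt_sSup zero_le_one hf) hf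
  refine ⟨c, hc, C, hC, fun l hl => ?_⟩
  have hl0 : 0 < l := zero_lt_one.trans_le hl
  have := mul_le_mul_of_nonneg_right (hfC 1 l le_rfl hl) (Real.rpow_nonneg hl0.le c)
  rwa [Real.one_rpow, mul_one, mul_assoc (f l), ← Real.rpow_add hl0, neg_add_cancel,
    Real.rpow_zero, mul_one] at this

theorem le_lowerIndex {f : ℝ → ℝ} {I D c : ℝ} (hfI : ∀ l, 1 ≤ l → f l ≤ I * l ^ 2)
    (hD : 0 < D) (hc : 0 < c) (hfD : ∀ l, 1 ≤ l → D * l ^ c ≤ f l) : c ≤ lowerIndex f := by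
  have hbdd : BddAbove {c : ℝ | 0 ≤ c ∧ Tendsto (fun l : ℝ => f l * l ^ (-c)) atTop atTop} := by
    refine ⟨2, fun c' ⟨_, hc'⟩ => not_lt.1 fun h2 => ?_⟩
    obtain ⟨l, hl, hl1⟩ := ((hc'.eventually_gt_atTop |I|).and (eventually_ge_atTop 1)).exists
    have hl0 : 0 < l := zero_lt_one.trans_le hl1
    have hpow : l ^ (2 : ℝ) * l ^ (-c') ≤ 1 := by
      rw [← Real.rpow_add hl0]
      exact Real.rpow_le_one_of_one_le_of_nonpos hl1 (by linarith)
    have := mul_le_mul_of_nonneg_right (hfI l hl1) (Real.rpow_nonneg hl0.le (-c'))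
    rw [← Real.rpow_natCast, Nat.cast_ofNat, mul_assoc] at this
    have hpow0 : 0 ≤ l ^ (2 : ℝ) * l ^ (-c') := by positivity
    nlinarith [le_abs_self I, abs_nonneg I]
  refine le_of_forall_lt_imp_le_of_dense fun c₀ hc₀ => ?_
  refine (le_max_left c₀ 0).trans (le_csSup hbdd ⟨le_max_right c₀ 0, ?_⟩)
  refine tendsto_atTop_mono' atTop ?_
    ((tendsto_rpow_atTop (sub_pos.2 (max_lt hc₀ hc))).const_mul_atTop hD)
  filter_upwards [eventually_ge_atTop 1] with l hl
  have hl0 : 0 < l := zero_lt_one.trans_le hl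
  rw [sub_eq_add_neg, Real.rpow_add hl0, ← mul_assoc]
  exact mul_le_mul_of_nonneg_right (hfD l hl) (Real.rpow_nonneg hl0.le _)

theorem tendsto_mul_rpow_neg_of_lt_lowerIndex {f : ℝ → ℝ} {c : ℝ} (hf : ∀ l, 1 ≤ l → 0 ≤ f l)
    (hc : 0 ≤ c) (hcf : c < lowerIndex f) : Tendsto (fun l => f l * l ^ (-c)) atTop atTop := by
  obtain ⟨s, ⟨-, hs⟩, hcs⟩ :=
    exists_lt_of_lt_csSup (Real.nonempty_of_nonneg_lt_sSup hc hcf) hcf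
  refine tendsto_atTop_mono' atTop ?_ hs
  filter_upwards [eventually_ge_atTop 1] with l hl
  exact mul_le_mul_of_nonneg_left (Real.rpow_le_rpow_of_exponent_le hl (by linarith)) (hf l hl)

theorem exists_le_mul_sq_of_sub_mul_le {L X : ℕ → ℝ} {a a' b A : ℝ} (ha : 0 ≤ a) (haa' : a < a')
    (hLX : ∀ n : ℕ, L n - a * X n ≤ b + n * (n + 1)) (hX : ∀ n, X n ≤ A ∨ a' * X n ≤ L n) :
    ∃ M, ∀ n : ℕ, 1 ≤ n → L n ≤ M * n ^ 2 := by
  have ha' : 0 < a' := ha.trans_lt haa'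
  refine ⟨(|b| + 2 + a * |A|) + (|b| + 2) * (a' / (a' - a)), fun n hn => ?_⟩
  have hn1 : (1 : ℝ) ≤ n := by exact_mod_cast hn
  have hn2 : (1 : ℝ) ≤ n ^ 2 := one_le_pow₀ hn1
  have hB : b + n * (n + 1) ≤ (|b| + 2) * n ^ 2 := by
    nlinarith [le_abs_self b, mul_nonneg (abs_nonneg b) (sub_nonneg.2 hn2)]
  have hM₁ : 0 ≤ (|b| + 2 + a * |A|) * n ^ 2 := by positivity
  have hM₂ : 0 ≤ (|b| + 2) * (a' / (a' - a)) * n ^ 2 :=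
    mul_nonneg (mul_nonneg (by positivity) (div_pos ha' (sub_pos.2 haa')).le) (by positivity)
  rcases hX n with hXA | hXL
  · have : a * X n ≤ a * |A| * n ^ 2 := by
      nlinarith [mul_le_mul_of_nonneg_left (hXA.trans (le_abs_self A)) ha,
        mul_nonneg (mul_nonneg ha (abs_nonneg A)) (sub_nonneg.2 hn2)]
    nlinarith [hLX n]
  · have h₁ : (a' - a) * L n ≤ a' * ((|b| + 2) * n ^ 2) := by
      nlinarith [mul_le_mul_of_nonneg_left hXL ha, mul_le_mul_of_nonneg_left (hLX n) ha'.le]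
    have h₂ : L n ≤ (|b| + 2) * (a' / (a' - a)) * n ^ 2 := by
      rw [mul_comm (|b| + 2), mul_assoc, div_mul_eq_mul_div, le_div_iff₀ (sub_pos.2 haa')]
      linarith
    linarith

theorem exists_log_le_mul_sq {f : ℝ → ℝ} {q : ℕ → ℝ} {a a' A : ℝ} (ha : 0 ≤ a) (haa' : a < a')
    (hgrow : ∀ v, A ≤ v → v ^ a' ≤ f v) (hq0 : q 0 = 1) (hq1 : ∀ n, 1 ≤ q n)
    (hfq : ∀ n, 0 < f (q n))
    (hctrl : ∀ n : ℕ, f (q (n + 1)) * q (n + 1) ^ (-a) ≤ exp (2 * (n + 1)) * f (q n) * q n ^ (-a)) :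
    ∃ M, ∀ n : ℕ, 1 ≤ n → log (f (q n)) ≤ M * n ^ 2 := by
  have hq0' : ∀ n, 0 < q n := fun n => zero_lt_one.trans_le (hq1 n)
  have hlog : ∀ n, log (f (q n) * q n ^ (-a)) = log (f (q n)) - a * log (q n) := fun n => by
    rw [Real.log_mul (hfq n).ne' (Real.rpow_pos_of_pos (hq0' n) _).ne', Real.log_rpow (hq0' n)]
    ring
  refine exists_le_mul_sq_of_sub_mul_le (X := fun n => log (q n)) (b := log (f 1)) (A := log A)
    ha haa' (fun n => ?_) fun n => ?_
  · induction n with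
    | zero => simp [hq0]
    | succ n ih =>
      have := Real.log_le_log (mul_pos (hfq _) (Real.rpow_pos_of_pos (hq0' _) _)) (hctrl n)
      rw [mul_assoc, Real.log_mul (Real.exp_pos _).ne'
        (mul_pos (hfq _) (Real.rpow_pos_of_pos (hq0' _) _)).ne', Real.log_exp, hlog, hlog] at this
      push_cast
      linarith
  · rcases le_or_gt A (q n) with hA | hA
    · right
      rw [← Real.log_rpow (hq0' n)]
      exact Real.log_le_log (Real.rpow_pos_of_pos (hq0' n) _) (hgrow _ hA)
    · exact .inl (Real.log_le_log (hq0' n) hA.le)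

theorem Real.continuousOn_rpow_const_Ici_one (b : ℝ) : ContinuousOn (fun v : ℝ => v ^ b) (Ici 1) :=
  continuousOn_id.rpow_const fun _ hv => Or.inl (zero_lt_one.trans_le hv).ne'

def recordPoints (f : ℝ → ℝ) (a : ℝ) : Set ℝ :=
  {q | 1 ≤ q ∧ ∀ v ∈ Icc 1 q, f v * v ^ (-a) ≤ f q * q ^ (-a)}

section recordPoints

variable {f : ℝ → ℝ} {a : ℝ}

theorem one_mem_recordPoints : (1 : ℝ) ∈ recordPoints f a :=
  ⟨le_rfl, fun v hv => by rw [le_antisymm hv.2 hv.1]⟩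

theorem isClosed_recordPoints (hf : ContinuousOn f (Ici 1)) : IsClosed (recordPoints f a) := by
  refine IsSeqClosed.isClosed fun x q hx hq => ?_
  have hx1 : ∀ᶠ n in atTop, x n ∈ Ici 1 := Eventually.of_forall fun n => (hx n).1
  have hq1 : 1 ≤ q := isClosed_Ici.mem_of_tendsto hq hx1
  have hlim : Tendsto (fun n => f (x n) * x n ^ (-a)) atTop (nhds (f q * q ^ (-a))) :=
    ((hf.mul (Real.continuousOn_rpow_const_Ici_one _)) q hq1).tendsto.comp
      (tendsto_nhdsWithin_iff.2 ⟨hq, hx1⟩)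
  refine ⟨hq1, fun v hv => hv.2.eq_or_lt.elim (fun hvq => hvq ▸ le_rfl) fun hvq => ?_⟩
  exact ge_of_tendsto hlim <|
    (hq.eventually (eventually_gt_nhds hvq)).mono fun n hn => (hx n).2 v ⟨hv.1, hn.le⟩

theorem exists_mem_recordPoints_isMaxOn (hf : ContinuousOn f (Ici 1)) {R : ℝ} (hR : 1 ≤ R) :
    ∃ m ∈ recordPoints f a, m ≤ R ∧ IsMaxOn (fun v => f v * v ^ (-a)) (Icc 1 R) m := by
  obtain ⟨m, hm, hmax⟩ := isCompact_Icc.exists_isMaxOn (nonempty_Icc.2 hR)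
    ((hf.mul (Real.continuousOn_rpow_const_Ici_one (-a))).mono Icc_subset_Ici_self)
  exact ⟨m, ⟨hm.1, fun v hv => hmax ⟨hv.1, hv.2.trans hm.2⟩⟩, hm.2, hmax⟩

theorem exists_mem_recordPoints_ge (hf : ContinuousOn f (Ici 1))
    (hg : Tendsto (fun v => f v * v ^ (-a)) atTop atTop) (w : ℝ) :
    ∃ q ∈ recordPoints f a, w ≤ q := by
  obtain ⟨m, -, -, hm⟩ := exists_mem_recordPoints_isMaxOn (a := a) hf (le_max_right w 1)
  obtain ⟨R, hRm, hRw⟩ :=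
    ((hg.eventually_gt_atTop (f m * m ^ (-a))).and (eventually_ge_atTop (max w 1))).exists
  obtain ⟨q, hq, -, hqR⟩ :=
    exists_mem_recordPoints_isMaxOn (a := a) hf ((le_max_right w 1).trans hRw)
  refine ⟨q, hq, not_lt.1 fun hqw => ?_⟩
  have hRq := isMaxOn_iff.1 hqR R ⟨(le_max_right w 1).trans hRw, le_rfl⟩
  have hqm := isMaxOn_iff.1 hm q ⟨hq.1, hqw.le.trans (le_max_left w 1)⟩
  exact (hRm.trans_le (hRq.trans hqm)).false

/-- `z` is the least record point `≥ x` with `f z ≥ T`. Every record point in `[x, z)` has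
`f < T`, which caps `f v * v ^ (-a)` by `T * x ^ (-a)` on `[x, z)`, and at `z` by continuity. -/
theorem exists_mem_recordPoints_step (hf : ContinuousOn f (Ici 1)) (hf0 : ∀ v, 1 ≤ v → 0 ≤ f v)
    (ha : 0 ≤ a) (hg : Tendsto (fun v => f v * v ^ (-a)) atTop atTop) {x T : ℝ}
    (hx : x ∈ recordPoints f a) (hxT : f x ≤ T) :
    ∃ z ∈ recordPoints f a, T ≤ f z ∧ f z * z ^ (-a) ≤ T * x ^ (-a) := by
  have hx0 : 0 < x := zero_lt_one.trans_le hx.1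
  have hT : 0 ≤ T := (hf0 x hx.1).trans hxT
  set Z := recordPoints f a ∩ (Ici x ∩ f ⁻¹' Ici T)
  have hZ : IsClosed Z := (isClosed_recordPoints hf).inter <|
    (hf.mono (Ici_subset_Ici.2 hx.1)).preimage_isClosed_of_isClosed isClosed_Ici isClosed_Ici
  have hZbdd : BddBelow Z := ⟨x, fun v hv => hv.2.1⟩
  have hZne : Z.Nonempty := by
    obtain ⟨R, hR⟩ := eventually_atTop.1 (hg.eventually_ge_atTop T)
    obtain ⟨q, hq, hqR⟩ := exists_mem_recordPoints_ge hf hg (max x R)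
    have hTq := hR q ((le_max_right x R).trans hqR)
    have hfq : f q * q ^ (-a) ≤ f q := mul_le_of_le_one_right (hf0 q hq.1)
      (Real.rpow_le_one_of_one_le_of_nonpos hq.1 (neg_nonpos.2 ha))
    exact ⟨q, hq, (le_max_left x R).trans hqR, hTq.trans hfq⟩
  obtain ⟨hz, hxz, hTz⟩ := hZ.csInf_mem hZne hZbdd
  refine ⟨sInf Z, hz, hTz, ?_⟩
  have hbelow : ∀ v ∈ Ico x (sInf Z), f v * v ^ (-a) ≤ T * x ^ (-a) := by
    intro v hv
    obtain ⟨m, hm, hmv, hmax⟩ := exists_mem_recordPoints_isMaxOn (a := a) hf (hx.1.trans hv.1)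
    refine (isMaxOn_iff.1 hmax v ⟨hx.1.trans hv.1, le_rfl⟩).trans ?_
    rcases le_total x m with hxm | hmx
    · have hfm : f m < T := not_le.1 fun hTm =>
        (csInf_le hZbdd ⟨hm, hxm, hTm⟩).not_gt (hmv.trans_lt hv.2)
      calc f m * m ^ (-a) ≤ T * m ^ (-a) :=
            mul_le_mul_of_nonneg_right hfm.le (Real.rpow_nonneg (hx0.trans_le hxm).le _)
        _ ≤ T * x ^ (-a) :=
            mul_le_mul_of_nonneg_left (Real.rpow_le_rpow_of_nonpos hx0 hxm (neg_nonpos.2 ha)) hT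
    · exact (hx.2 m ⟨hm.1, hmx⟩).trans
        (mul_le_mul_of_nonneg_right hxT (Real.rpow_nonneg hx0.le _))
  rcases hxz.out.eq_or_lt with hxz | hxz
  · rw [← hxz]
    exact mul_le_mul_of_nonneg_right hxT (Real.rpow_nonneg hx0.le _)
  · refine ContinuousWithinAt.closure_le (f := fun v => f v * v ^ (-a))
      (g := fun _ => T * x ^ (-a)) (by rw [closure_Ico hxz.ne]; exact right_mem_Icc.2 hxz.le)
      ?_ continuousWithinAt_const hbelow
    exact ((hf.mul (Real.continuousOn_rpow_const_Ici_one _)) _ (hx.1.trans hxz.le)).mono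
      fun v hv => hx.1.trans hv.1

theorem exists_seq_mem_recordPoints (hf : ContinuousOn f (Ici 1)) (hf0 : ∀ v, 1 ≤ v → 0 ≤ f v)
    (ha : 0 ≤ a) (hg : Tendsto (fun v => f v * v ^ (-a)) atTop atTop) (c : ℕ → ℝ)
    (hc : ∀ n, 1 ≤ c n) :
    ∃ q : ℕ → ℝ, q 0 = 1 ∧ ∀ n, q n ∈ recordPoints f a ∧ c n * f (q n) ≤ f (q (n + 1)) ∧
      f (q (n + 1)) * q (n + 1) ^ (-a) ≤ c n * f (q n) * q n ^ (-a) := by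
  have hstep : ∀ n, ∀ x ∈ recordPoints f a, ∃ z ∈ recordPoints f a,
      c n * f x ≤ f z ∧ f z * z ^ (-a) ≤ c n * f x * x ^ (-a) := fun n x hx =>
    exists_mem_recordPoints_step hf hf0 ha hg hx (le_mul_of_one_le_left (hf0 x hx.1) (hc n))
  choose! Φ hΦ using hstep
  let q : ℕ → ℝ := fun n => Nat.rec (motive := fun _ => ℝ) 1 Φ n
  have hq : ∀ n, q n ∈ recordPoints f a := by
    intro n
    induction n with
    | zero => exact one_mem_recordPoints
    | succ n ih => exact (hΦ n _ ih).1
  exact ⟨q, rfl, fun n => ⟨hq n, (hΦ n _ (hq n)).2⟩⟩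

theorem tendsto_mul_rpow_neg_of_rpow_le {a' A : ℝ} (haa' : a < a')
    (hgrow : ∀ v, A ≤ v → v ^ a' ≤ f v) : Tendsto (fun v => f v * v ^ (-a)) atTop atTop := by
  refine tendsto_atTop_mono' atTop ?_ (tendsto_rpow_atTop (sub_pos.2 haa'))
  filter_upwards [eventually_ge_atTop A, eventually_gt_atTop 0] with v hvA hv0
  rw [sub_eq_add_neg, Real.rpow_add hv0]
  exact mul_le_mul_of_nonneg_right (hgrow v hvA) (Real.rpow_nonneg hv0.le _)

theorem exists_seq_mem_recordPoints_log_le (hf : ContinuousOn f (Ici 1))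
    (hf0 : ∀ v, 1 ≤ v → 0 ≤ f v) (hf1 : 0 < f 1) {a' A : ℝ} (ha : 0 ≤ a) (haa' : a < a')
    (hgrow : ∀ v, A ≤ v → v ^ a' ≤ f v) :
    ∃ q : ℕ → ℝ, (∀ n, q n ∈ recordPoints f a) ∧ (∀ n, 1 ≤ n → f 1 < f (q n)) ∧
      (∀ n : ℕ, exp (2 * n) * f (q n) ≤ f (q (n + 1))) ∧
      ∃ M, ∀ n : ℕ, 1 ≤ n → log (f (q n)) ≤ M * n ^ 2 := by
  obtain ⟨q, hq0, hq⟩ := exists_seq_mem_recordPoints hf hf0 ha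
    (tendsto_mul_rpow_neg_of_rpow_le haa' hgrow) (fun n : ℕ => exp (2 * (n + 1)))
    fun n => Real.one_le_exp (by positivity)
  have hf1q : ∀ n, f 1 ≤ f (q n) := by
    intro n
    induction n with
    | zero => rw [hq0]
    | succ n ih => exact ih.trans <| (le_mul_of_one_le_left (hf0 _ (hq n).1.1)
        (Real.one_le_exp (by positivity))).trans (hq n).2.1
  refine ⟨q, fun n => (hq n).1, fun n hn => ?_, fun n => ?_,
    exists_log_le_mul_sq ha haa' hgrow hq0 (fun n => (hq n).1.1)
      (fun n => hf1.trans_le (hf1q n)) fun n => (hq n).2.2⟩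
  · obtain ⟨m, rfl⟩ := Nat.exists_eq_add_of_le' hn
    exact (hf1q m).trans_lt <| (lt_mul_of_one_lt_left (hf1.trans_le (hf1q m))
      (Real.one_lt_exp_iff.2 (by positivity))).trans_le (hq m).2.1
  · exact (mul_le_mul_of_nonneg_right (Real.exp_le_exp.2 (by linarith))
      (hf0 _ (hq n).1.1)).trans (hq n).2.1

theorem intervalIntegral_mul_rpow_neg_le (hf : ContinuousOn f (Ici 1)) {p q : ℝ}
    (hq : q ∈ recordPoints f a) (hfq : 0 ≤ f q) (hpa : p < a + 1) :
    ∫ v in (1 : ℝ)..q, f v * v ^ (-p) ≤ f q * q ^ (1 - p) / (a + 1 - p) := by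
  have hq0 : 0 < q := zero_lt_one.trans_le hq.1
  have hIcc : uIcc 1 q ⊆ Ici 1 := by rw [uIcc_of_le hq.1]; exact Icc_subset_Ici_self
  have hint₁ : IntervalIntegrable (fun v => f v * v ^ (-p)) volume 1 q :=
    ((hf.mul (Real.continuousOn_rpow_const_Ici_one _)).mono hIcc).intervalIntegrable
  have hint₂ : IntervalIntegrable (fun v => f q * q ^ (-a) * v ^ (a - p)) volume 1 q :=
    (continuousOn_const.mul ((Real.continuousOn_rpow_const_Ici_one _).mono hIcc)).intervalIntegrable
  calc ∫ v in (1 : ℝ)..q, f v * v ^ (-p)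
      ≤ ∫ v in (1 : ℝ)..q, f q * q ^ (-a) * v ^ (a - p) := by
        refine intervalIntegral.integral_mono_on hq.1 hint₁ hint₂ fun v hv => ?_
        have hv0 : 0 < v := zero_lt_one.trans_le hv.1
        rw [show -p = -a + (a - p) by ring, Real.rpow_add hv0, ← mul_assoc]
        exact mul_le_mul_of_nonneg_right (hq.2 v hv) (Real.rpow_nonneg hv0.le _)
    _ = f q * q ^ (-a) * ((q ^ (a - p + 1) - 1) / (a - p + 1)) := by
        rw [intervalIntegral.integral_const_mul, integral_rpow (.inl (by linarith)),
          Real.one_rpow]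
    _ ≤ f q * q ^ (-a) * (q ^ (a - p + 1) / (a - p + 1)) := by
        refine mul_le_mul_of_nonneg_left ?_ (mul_nonneg hfq (Real.rpow_nonneg hq0.le _))
        exact div_le_div_of_nonneg_right (by linarith) (by linarith)
    _ = f q * (q ^ (-a) * q ^ (a - p + 1)) / (a - p + 1) := by ring
    _ = f q * q ^ (1 - p) / (a + 1 - p) := by
        rw [← Real.rpow_add hq0, show -a + (a - p + 1) = 1 - p by ring,
          show a - p + 1 = a + 1 - p by ring]

end recordPoints

namespace IsBranchingMechanism

variable {α β : ℝ} {π : Measure ℝ} (h : IsBranchingMechanism α β π)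
include h

theorem ae_pos : ∀ᵐ r ∂π, 0 < r := by
  simpa [ae_iff, Iic] using h.carried_on_pos

theorem integrable_psiDeriv_integrand {v : ℝ} (hv : 0 ≤ v) :
    Integrable (fun r => r * (1 - exp (-(v * r)))) π :=
  (h.integ_min.const_mul (v + 1)).mono' (by fun_prop) <| h.ae_pos.mono fun r hr => by
    rw [Real.norm_of_nonneg (mul_one_sub_exp_neg_nonneg hr.le hv)]
    exact mul_one_sub_exp_neg_le hr hv

theorem integrable_psiFun_integrand {v : ℝ} (hv : 0 ≤ v) :
    Integrable (fun r => exp (-(v * r)) - 1 + v * r) π :=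
  ((h.integrable_psiDeriv_integrand hv).const_mul v).mono' (by fun_prop) <|
    h.ae_pos.mono fun r hr => by
      rw [Real.norm_of_nonneg (exp_neg_sub_one_add_nonneg _), ← mul_assoc]
      exact exp_neg_sub_one_add_le (v * r)

theorem psiFun_nonneg {v : ℝ} (hv : 0 ≤ v) : 0 ≤ psiFun α β π v := by
  have : 0 ≤ ∫ r, (exp (-(v * r)) - 1 + v * r) ∂π :=
    integral_nonneg fun r => exp_neg_sub_one_add_nonneg (v * r)
  have := h.alpha_nonneg
  have := h.beta_nonneg
  unfold psiFun
  positivity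

theorem psiDeriv_nonneg {v : ℝ} (hv : 0 ≤ v) : 0 ≤ psiDeriv α β π v := by
  have := integral_nonneg_of_ae (μ := π) <|
    h.ae_pos.mono fun r hr => mul_one_sub_exp_neg_nonneg hr.le hv
  have := h.alpha_nonneg
  have := h.beta_nonneg
  unfold psiDeriv
  positivity

theorem psiFun_le_mul_psiDeriv {v : ℝ} (hv : 0 ≤ v) :
    psiFun α β π v ≤ v * psiDeriv α β π v := by
  have hint : ∫ r, (exp (-(v * r)) - 1 + v * r) ∂π ≤ v * ∫ r, r * (1 - exp (-(v * r))) ∂π := by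
    rw [← integral_const_mul]
    refine integral_mono (h.integrable_psiFun_integrand hv)
      ((h.integrable_psiDeriv_integrand hv).const_mul v) fun r => ?_
    rw [← mul_assoc]
    exact exp_neg_sub_one_add_le (v * r)
  unfold psiFun psiDeriv
  nlinarith [h.beta_nonneg]

theorem psiDeriv_le_mul {v : ℝ} (hv : 1 ≤ v) :
    psiDeriv α β π v ≤ (α + 2 * β + 2 * ∫ r, min r (r ^ 2) ∂π) * v := by
  have hint : ∫ r, r * (1 - exp (-(v * r))) ∂π ≤ (v + 1) * ∫ r, min r (r ^ 2) ∂π := by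
    rw [← integral_const_mul]
    exact integral_mono_ae (h.integrable_psiDeriv_integrand (by linarith))
      (h.integ_min.const_mul _) (h.ae_pos.mono fun r hr => mul_one_sub_exp_neg_le hr (by linarith))
  have hmin : 0 ≤ ∫ r, min r (r ^ 2) ∂π :=
    integral_nonneg_of_ae <| h.ae_pos.mono fun r hr => le_min hr.le (by positivity)
  unfold psiDeriv
  nlinarith [h.alpha_nonneg]

theorem exists_psiFun_le_mul_sq : ∃ I, ∀ l, 1 ≤ l → psiFun α β π l ≤ I * l ^ 2 :=
  ⟨_, fun l hl => (h.psiFun_le_mul_psiDeriv (by linarith)).trans <| by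
    nlinarith [h.psiDeriv_le_mul hl]⟩

theorem continuousAt_psiDeriv {v₀ : ℝ} (hv₀ : 0 < v₀) : ContinuousAt (psiDeriv α β π) v₀ := by
  refine (continuousAt_const.add (by fun_prop)).add <|
    continuousAt_of_dominated (bound := fun r => (v₀ + 2) * min r (r ^ 2))
      (Eventually.of_forall fun v => by fun_prop) ?_ (h.integ_min.const_mul _)
      (Eventually.of_forall fun r => by fun_prop)
  filter_upwards [Ioo_mem_nhds hv₀ (lt_add_one v₀)] with v hv
  filter_upwards [h.ae_pos] with r hr
  rw [Real.norm_of_nonneg (mul_one_sub_exp_neg_nonneg hr.le hv.1.le)]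
  exact (mul_one_sub_exp_neg_le hr hv.1.le).trans <|
    mul_le_mul_of_nonneg_right (by linarith [hv.2]) (le_min hr.le (by positivity))

theorem continuousOn_psiDeriv : ContinuousOn (psiDeriv α β π) (Ici 1) :=
  fun _ hv => (h.continuousAt_psiDeriv (zero_lt_one.trans_le hv)).continuousWithinAt

theorem psiFun_eq_zero_of_psiFun_one_eq_zero (h1 : psiFun α β π 1 = 0) :
    psiFun α β π = fun _ => 0 := by
  have hI : 0 ≤ ∫ r, (exp (-(1 * r)) - 1 + 1 * r) ∂π :=
    integral_nonneg fun r => exp_neg_sub_one_add_nonneg _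
  unfold psiFun at h1
  have hα : α = 0 := by nlinarith [h.alpha_nonneg, h.beta_nonneg]
  have hβ : β = 0 := by nlinarith [h.alpha_nonneg, h.beta_nonneg]
  have hae : ∀ᵐ r ∂π, exp (-(1 * r)) - 1 + 1 * r = 0 :=
    (integral_eq_zero_iff_of_nonneg (fun r => exp_neg_sub_one_add_nonneg _)
      (h.integrable_psiFun_integrand zero_le_one)).1 (by linarith)
  have hπ : π = 0 := by
    refine ae_eq_bot.1 (eventually_false_iff_eq_bot.1 ?_)
    filter_upwards [hae, h.ae_pos] with r hr hr0
    linarith [Real.add_one_lt_exp (x := -(1 * r)) (by linarith)]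
  funext l
  simp [psiFun, hα, hβ, hπ]

theorem psiFun_one_pos (hδ : 1 < deltaIndex (psiFun α β π)) : 0 < psiFun α β π 1 := by
  refine (h.psiFun_nonneg zero_le_one).lt_of_ne fun h1 => ?_
  rw [h.psiFun_eq_zero_of_psiFun_one_eq_zero h1.symm, deltaIndex_zero] at hδ
  exact zero_lt_one.not_gt hδ

theorem psiDeriv_one_pos (hδ : 1 < deltaIndex (psiFun α β π)) : 0 < psiDeriv α β π 1 :=
  (h.psiFun_one_pos hδ).trans_le (by simpa using h.psiFun_le_mul_psiDeriv zero_le_one)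

theorem one_lt_lowerIndex (hδ : 1 < deltaIndex (psiFun α β π)) :
    1 < lowerIndex (psiFun α β π) := by
  obtain ⟨c, hc, C, hC, hψc⟩ := exists_rpow_le_of_one_lt_deltaIndex hδ
  obtain ⟨I, hI⟩ := h.exists_psiFun_le_mul_sq
  exact hc.trans_le (le_lowerIndex hI (mul_pos hC (h.psiFun_one_pos hδ)) (by linarith) hψc)

theorem exists_rpow_le_psiDeriv {c : ℝ}
    (hc : Tendsto (fun l => psiFun α β π l * l ^ (-(c + 1))) atTop atTop) :
    ∃ A, ∀ v, A ≤ v → v ^ c ≤ psiDeriv α β π v := by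
  obtain ⟨A, hA⟩ := eventually_atTop.1 (hc.eventually_ge_atTop 1)
  refine ⟨max A 1, fun v hv => ?_⟩
  have hv0 : 0 < v := zero_lt_one.trans_le ((le_max_right A 1).trans hv)
  have hψ := mul_le_mul_of_nonneg_right (hA v ((le_max_left A 1).trans hv))
    (Real.rpow_nonneg hv0.le (c + 1))
  rw [one_mul, mul_assoc, ← Real.rpow_add hv0, neg_add_cancel, Real.rpow_zero, mul_one,
    Real.rpow_add_one hv0.ne', mul_comm] at hψ
  exact le_of_mul_le_mul_left (hψ.trans (h.psiFun_le_mul_psiDeriv hv0.le)) hv0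

theorem Jfun_sqrt_div_le {ψ'inv : ℝ → ℝ}
    (hψ'inv' : ∀ y, 0 ≤ y → ψ'inv (psiDeriv α β π y) = y) {K : ℝ} (hK : 0 < K) {d : ℕ}
    (hd : 2 < (d : ℝ)) {a q : ℝ} (hq : q ∈ recordPoints (psiDeriv α β π) a)
    (hFq : 0 < psiDeriv α β π q) (hda : (d : ℝ) / (d - 2) < a + 1) :
    Jfun α β π ψ'inv K d √(K / psiDeriv α β π q) ≤ K / (a + 1 - d / (d - 2)) := by
  have he₁ : (2 : ℝ) / (d - 2) = d / (d - 2) - 1 := by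
    have : (d : ℝ) - 2 ≠ 0 := by linarith
    field_simp
    ring
  set p := (d : ℝ) / (d - 2)
  have hq0 : 0 < q := zero_lt_one.trans_le hq.1
  have hρ : √(K / psiDeriv α β π q) ^ 2 = K / psiDeriv α β π q := Real.sq_sqrt (by positivity)
  have hinv : ψ'inv (K / (K / psiDeriv α β π q)) = q := by
    rw [div_div_cancel₀ hK.ne']
    exact hψ'inv' q hq0.le
  unfold Jfun
  rw [hρ, hinv, he₁, neg_div]
  calc K / psiDeriv α β π q * q ^ (p - 1) * ∫ v in (1 : ℝ)..q, psiDeriv α β π v * v ^ (-p)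
      ≤ K / psiDeriv α β π q * q ^ (p - 1) *
          (psiDeriv α β π q * q ^ (1 - p) / (a + 1 - p)) :=
        mul_le_mul_of_nonneg_left (intervalIntegral_mul_rpow_neg_le h.continuousOn_psiDeriv hq
          hFq.le hda) (by positivity)
    _ = K * (q ^ (p - 1) * q ^ (1 - p)) / (a + 1 - p) := by
        field_simp
    _ = K / (a + 1 - p) := by
        rw [← Real.rpow_add hq0, sub_add_sub_cancel', sub_self, Real.rpow_zero, mul_one]

end IsBranchingMechanism

lemma two_lt_and_div_sub_two_lt {γ x : ℝ} (hγ : 1 < γ) (hx : 2 * γ / (γ - 1) < x) :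
    2 < x ∧ x / (x - 2) < γ := by
  have h : 2 * γ < x * (γ - 1) := (div_lt_iff₀ (sub_pos.2 hγ)).1 hx
  have hx2 : 2 < x := by nlinarith
  exact ⟨hx2, (div_lt_iff₀ (by linarith)).2 (by nlinarith)⟩

lemma sqrt_div_le_exp_neg_mul_sqrt_div {K x y t : ℝ} (hK : 0 ≤ K) (hx : 0 < x)
    (hxy : exp (2 * t) * x ≤ y) : √(K / y) ≤ exp (-t) * √(K / x) := by
  rw [← Real.sqrt_sq (Real.exp_pos (-t)).le, ← Real.sqrt_mul (sq_nonneg _)]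
  refine Real.sqrt_le_sqrt ((div_le_div_of_nonneg_left hK (by positivity) hxy).trans_eq ?_)
  rw [← Real.exp_nat_mul, Nat.cast_ofNat, mul_neg, Real.exp_neg]
  field_simp

lemma inv_sq_mul_log_one_div_sqrt_div_le {K y M : ℝ} {n : ℕ} (hK : 0 < K) (hy : 0 < y)
    (hn : 1 ≤ n) (hyM : log y ≤ M * n ^ 2) :
    ((n : ℝ))⁻¹ ^ 2 * log (1 / √(K / y)) ≤ (M + |log K|) / 2 := by
  have hn2 : (1 : ℝ) ≤ n ^ 2 := one_le_pow₀ (by exact_mod_cast hn)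
  rw [one_div, Real.log_inv, Real.log_sqrt (by positivity), Real.log_div hK.ne' hy.ne', inv_pow,
    inv_mul_le_iff₀ (by positivity)]
  nlinarith [neg_abs_le (log K), mul_nonneg (abs_nonneg (log K)) (sub_nonneg.2 hn2)]

theorem statement13_general (α β : ℝ) (π : Measure ℝ) (h : IsBranchingMechanism α β π)
    (hδ : 1 < deltaIndex (psiFun α β π))
    (d : ℕ)
    (hd : 2 * lowerIndex (psiFun α β π) / (lowerIndex (psiFun α β π) - 1) < (d : ℝ))
    (K : ℝ) (hK : 0 < K)
    (ψ'inv : ℝ → ℝ)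
    (hψ'inv' : ∀ y : ℝ, 0 ≤ y → ψ'inv (psiDeriv α β π y) = y) :
    ∃ (ρ : ℕ → ℝ) (C : ℝ), 0 < C ∧
      (∀ n : ℕ, 1 ≤ n → 0 < ρ n ∧ ρ n < Real.sqrt (K / psiDeriv α β π 1)) ∧
      (∀ n : ℕ, 1 ≤ n → ρ (n + 1) ≤ Real.exp (-(n : ℝ)) * ρ n) ∧
      (∃ M : ℝ, ∀ n : ℕ, 1 ≤ n → ((n : ℝ))⁻¹ ^ 2 * Real.log (1 / ρ n) ≤ M) ∧
      (∀ n : ℕ, 1 ≤ n → Jfun α β π ψ'inv K d (ρ n) ≤ C) := by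
  have hγ := h.one_lt_lowerIndex hδ
  obtain ⟨hd2, hdγ⟩ := two_lt_and_div_sub_two_lt hγ hd
  have hp : 1 < (d : ℝ) / (d - 2) := (one_lt_div (by linarith)).2 (by linarith)
  obtain ⟨a, hpa, haγ⟩ := exists_between (sub_lt_sub_right hdγ 1)
  obtain ⟨a', haa', ha'γ⟩ := exists_between haγ
  obtain ⟨A, hA⟩ := h.exists_rpow_le_psiDeriv <| tendsto_mul_rpow_neg_of_lt_lowerIndex
    (fun l hl => h.psiFun_nonneg (by linarith)) (by linarith) (by linarith)
  have hF1 := h.psiDeriv_one_pos hδ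
  obtain ⟨q, hq, hq1, hqgrow, M, hM⟩ := exists_seq_mem_recordPoints_log_le
    h.continuousOn_psiDeriv (fun v hv => h.psiDeriv_nonneg (by linarith)) hF1
    (by linarith) haa' hA
  have hFq : ∀ n, 1 ≤ n → 0 < psiDeriv α β π (q n) := fun n hn => hF1.trans (hq1 n hn)
  refine ⟨fun n => √(K / psiDeriv α β π (q n)), K / (a + 1 - d / (d - 2)), div_pos hK (by linarith),
    fun n hn => ⟨?_, ?_⟩, fun n hn => ?_, ⟨(M + |log K|) / 2, fun n hn => ?_⟩, fun n hn => ?_⟩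
  · exact Real.sqrt_pos.2 (div_pos hK (hFq n hn))
  · exact Real.sqrt_lt_sqrt (div_pos hK (hFq n hn)).le (div_lt_div_of_pos_left hK hF1 (hq1 n hn))
  · exact sqrt_div_le_exp_neg_mul_sqrt_div hK.le (hFq n hn) (hqgrow n)
  · exact inv_sq_mul_log_one_div_sqrt_div_le hK (hFq n hn) hn (hM n hn)
  · exact h.Jfun_sqrt_div_le hψ'inv' hK hd2 (hq n) (hFq n hn) (by linarith)

/-- if δ > 1 and d > 2γ/(γ−1), there are radii (ρ_n)_{n≥1} in
(0, (K/ψ′(1))^{1/2}) with ρ_{n+1} ≤ e^{−n}ρ_n, sup_{n≥1} n^{−2} log(1/ρ_n) < ∞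
and J(ρ_n) ≤ C for all n ≥ 1. -/
theorem statement13 (α β : ℝ) (π : Measure ℝ) (h : IsBranchingMechanism α β π)
    (hδ : 1 < deltaIndex (psiFun α β π))
    (d : ℕ)
    (hd : 2 * lowerIndex (psiFun α β π) / (lowerIndex (psiFun α β π) - 1) < (d : ℝ))
    (K : ℝ) (hK : 0 < K)
    (ψ'inv : ℝ → ℝ)
    (hψ'inv : ∀ x : ℝ, α ≤ x → 0 ≤ ψ'inv x ∧ psiDeriv α β π (ψ'inv x) = x)
    (hψ'inv' : ∀ y : ℝ, 0 ≤ y → ψ'inv (psiDeriv α β π y) = y) :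
    ∃ (ρ : ℕ → ℝ) (C : ℝ), 0 < C ∧
      (∀ n : ℕ, 1 ≤ n → 0 < ρ n ∧ ρ n < Real.sqrt (K / psiDeriv α β π 1)) ∧
      (∀ n : ℕ, 1 ≤ n → ρ (n + 1) ≤ Real.exp (-(n : ℝ)) * ρ n) ∧
      (∃ M : ℝ, ∀ n : ℕ, 1 ≤ n → ((n : ℝ))⁻¹ ^ 2 * Real.log (1 / ρ n) ≤ M) ∧
      (∀ n : ℕ, 1 ≤ n → Jfun α β π ψ'inv K d (ρ n) ≤ C) :=
  statement13_general α β π h hδ d hd K hK ψ'inv hψ'inv'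
end
end

section
/- Let ψ be a branching mechanism of Lévy–Khintchine form with δ > 1, and set Φ(λ) = (ψ′(ψ^{−1}(λ)) − α)^{1/2} for λ ≥ 0. Let (Ω, 𝓕, P) be a probability space carrying a family (S_r)_{r ∈ [0,∞)} of nonnegative random variables such that E[exp(−λ·S_r)] = exp(−r·Φ(λ)) for all λ, r ∈ [0,∞). Let (ρ_n)_{n≥0} be a sequence with ρ_n ∈ (0, r₀/4) for all n, ρ_{n+1} ≤ e^{−n}·ρ_n for all n ≥ 0, and sup_{n≥1} n^{−2}·log(1/ρ_n) < ∞. Then: (i) Σ_{n≥0} P(S_{ρ_n} ≤ g(4ρ_n)) = ∞; and (ii) P-almost surely, limsup_{n→∞} S_{ρ_{n+1}}/g(4ρ_n) < ∞. -/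
/-!
Put `L = log log (1/r)` and `λ = φ⁻¹((L/r)²)`, so that `g(r) = L/λ` and the Laplace identity
reads `E e^{-λ S_s} = e^{-s Φ(λ)}` with `Φ(λ) = √((L/r)² - α) ≤ L/r`. Chernoff's bound
`P(S_s ≤ L/λ) ≥ e^{-sΦ(λ)} - e^{-L}` and Markov's bound
`(1 - e^{-L}) P(S_s > L/λ) ≤ 1 - e^{-sΦ(λ)}` then give, with `r = 4ρ_n`,
`P(S_{ρ_n} ≤ g(4ρ_n)) ≳ (log (1/ρ_n))^{-1/4} ≳ 1/n`, which is not summable, and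
`P(S_{ρ_{n+1}} > g(4ρ_n)) ≲ e^{-n} L ≲ n² e^{-n}`, which is; Borel–Cantelli finishes (ii).
-/

open MeasureTheory Filter Set

noncomputable section

/-- `r₀ = min(α^{−1/2}, e^{−e})`, with the convention `α^{−1/2} = ∞` when `α = 0`. -/
def gaugeR0 (α : ℝ) : ℝ :=
  if α = 0 then Real.exp (-Real.exp 1)
  else min (α ^ (-(1 : ℝ) / 2)) (Real.exp (-Real.exp 1))

/-- The gauge function `g(r) = log log(1/r) / φ^{−1}(((1/r)·log log(1/r))²)`,
expressed through the inverse `φ^{−1}` of `φ = ψ′ ∘ ψ^{−1}`. -/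
def gaugeFun (φinv : ℝ → ℝ) : ℝ → ℝ := fun r =>
  Real.log (Real.log (1 / r)) / φinv ((1 / r * Real.log (Real.log (1 / r))) ^ 2)

section Elementary

open Real

lemma not_summable_of_eventually_div_natCast_le {f : ℕ → ℝ} {c : ℝ} (hc : 0 < c)
    (hf : ∀ᶠ n in atTop, c / n ≤ f n) : ¬ Summable f := by
  intro hsum
  have hdiv : Summable fun n : ℕ => c * (1 / n) := by
    refine Summable.of_norm_bounded_eventually_nat hsum (hf.mono fun n hn => ?_)
    rwa [norm_of_nonneg (by positivity), ← div_eq_mul_one_div]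
  exact not_summable_one_div_natCast ((summable_mul_left_iff hc.ne').1 hdiv)

lemma exists_forall_div_le_of_eventually_le {u v : ℕ → ℝ} (hv : ∀ n, 0 ≤ v n)
    (h : ∀ᶠ n in atTop, u n ≤ v n) : ∃ M, ∀ n, u n / v n ≤ M := by
  obtain ⟨M, hM⟩ := (isBoundedUnder_of_eventually_le
    (h.mono fun n hn => div_le_one_of_le₀ hn (hv n))).bddAbove_range
  exact ⟨M, fun n => hM (mem_range_self n)⟩

lemma inv_sqrt_le_exp_neg_log_div_four {t : ℝ} (ht : 1 ≤ t) :
    (√t)⁻¹ ≤ exp (-(log t / 4)) := by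
  have hlog : 0 ≤ log t := log_nonneg ht
  calc (√t)⁻¹ = exp (-(log t / 2)) := by
        rw [exp_neg, exp_half, exp_log (by linarith)]
    _ ≤ exp (-(log t / 4)) := exp_le_exp.2 (by linarith)

lemma mul_le_div_four_of_le_mul_of_le_one_div_four_mul {ρ s k c L : ℝ} (hρ : 0 < ρ)
    (hc : 0 ≤ c) (hk : 0 ≤ k) (hs : s ≤ c * ρ) (hkL : k ≤ 1 / (4 * ρ) * L) :
    s * k ≤ c * L / 4 :=
  calc s * k ≤ c * ρ * (1 / (4 * ρ) * L) := mul_le_mul hs hkL hk (by positivity)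
    _ = c * L / 4 := by field_simp

end Elementary

section Gauge

open Real

lemma gaugeR0_le_exp_neg_exp (α : ℝ) : gaugeR0 α ≤ exp (-exp 1) := by
  unfold gaugeR0
  split_ifs
  exacts [le_rfl, min_le_right _ _]

lemma exp_one_lt_log_one_div {r : ℝ} (hr : 0 < r) (hre : r < exp (-exp 1)) :
    exp 1 < log (1 / r) := by
  rw [lt_log_iff_exp_lt (by positivity), lt_div_iff₀ hr]
  calc exp (exp 1) * r < exp (exp 1) * exp (-exp 1) := by gcongr
    _ = 1 := by rw [← exp_add, add_neg_cancel, exp_zero]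

lemma lt_sq_of_lt_gaugeR0 {α r L : ℝ} (hα : 0 ≤ α) (hr : 0 < r) (hrα : r < gaugeR0 α)
    (hL : 1 ≤ L) : α < (1 / r * L) ^ 2 := by
  have hrL : 1 / r ≤ 1 / r * L := le_mul_of_one_le_right (by positivity) hL
  rcases hα.eq_or_lt with rfl | hα
  · positivity
  have hR : gaugeR0 α ≤ (√α)⁻¹ := by
    rw [gaugeR0, if_neg hα.ne', neg_div, rpow_neg hα.le, ← sqrt_eq_rpow]
    exact min_le_left _ _
  have hsqrt : √α < 1 / r := by
    rw [lt_one_div (sqrt_pos.2 hα) hr, one_div]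
    exact hrα.trans_le hR
  calc α = √α ^ 2 := (sq_sqrt hα.le).symm
    _ < (1 / r * L) ^ 2 := pow_lt_pow_left₀ (hsqrt.trans_le hrL) (sqrt_nonneg α) two_ne_zero

lemma log_one_div_four_mul_le {ρ M : ℝ} {n : ℕ} (hρ : 0 < ρ) (hn : 1 ≤ n)
    (h : ((n : ℝ))⁻¹ ^ 2 * log (1 / ρ) ≤ M) : log (1 / (4 * ρ)) ≤ M * n ^ 2 := by
  have hn' : (0 : ℝ) < n := by exact_mod_cast hn
  calc log (1 / (4 * ρ)) ≤ log (1 / ρ) :=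
        log_le_log (by positivity) (one_div_le_one_div_of_le hρ (by linarith))
    _ ≤ M * n ^ 2 := by
        rw [← div_le_iff₀ (by positivity), div_eq_inv_mul, ← inv_pow]
        exact h

end Gauge

section LaplaceTail

open Real

variable {Ω : Type*} [MeasurableSpace Ω] {P : Measure Ω} [IsProbabilityMeasure P]
  {T : Ω → ℝ} {lam a L x : ℝ}

lemma integrable_exp_neg_mul (hT : Measurable T) (hT0 : ∀ ω, 0 ≤ T ω) (hlam : 0 ≤ lam) :
    Integrable (fun ω => exp (-(lam * T ω))) P := by
  refine Integrable.of_bound (by fun_prop) 1 (ae_of_all _ fun ω => ?_)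
  rw [norm_of_nonneg (exp_pos _).le, exp_le_one_iff, neg_nonpos]
  exact mul_nonneg hlam (hT0 ω)

lemma integral_exp_neg_mul_le_measureReal_le_add (hT : Measurable T) (hT0 : ∀ ω, 0 ≤ T ω)
    (hlam : 0 ≤ lam) :
    ∫ ω, exp (-(lam * T ω)) ∂P ≤ P.real {ω | T ω ≤ a} + exp (-(lam * a)) := by
  have hmeas : MeasurableSet {ω | T ω ≤ a} := measurableSet_le hT measurable_const
  have hpointwise (ω : Ω) :
      exp (-(lam * T ω)) ≤ {ω | T ω ≤ a}.indicator 1 ω + exp (-(lam * a)) := by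
    by_cases hω : T ω ≤ a
    · rw [indicator_of_mem (show ω ∈ {ω | T ω ≤ a} from hω), Pi.one_apply]
      have := exp_le_one_iff.2 (neg_nonpos.2 (mul_nonneg hlam (hT0 ω)))
      linarith [exp_pos (-(lam * a))]
    · rw [indicator_of_notMem (show ω ∉ {ω | T ω ≤ a} from hω), zero_add]
      exact exp_le_exp.2 (neg_le_neg (mul_le_mul_of_nonneg_left (not_le.1 hω).le hlam))
  calc ∫ ω, exp (-(lam * T ω)) ∂P
      ≤ ∫ ω, ({ω | T ω ≤ a}.indicator 1 ω + exp (-(lam * a))) ∂P :=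
        integral_mono (integrable_exp_neg_mul hT hT0 hlam)
          (((integrable_const 1).indicator hmeas).add (integrable_const _)) hpointwise
    _ = P.real {ω | T ω ≤ a} + exp (-(lam * a)) := by
        rw [integral_add ((integrable_const 1).indicator hmeas) (integrable_const _),
          integral_indicator_one hmeas, integral_const, probReal_univ, one_smul]

lemma one_sub_exp_neg_mul_mul_measureReal_lt_le (hT : Measurable T) (hT0 : ∀ ω, 0 ≤ T ω)
    (hlam : 0 ≤ lam) (ha : 0 ≤ a) :
    (1 - exp (-(lam * a))) * P.real {ω | a < T ω} ≤ 1 - ∫ ω, exp (-(lam * T ω)) ∂P := by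
  have hmarkov := mul_meas_ge_le_integral_of_nonneg (μ := P)
    (ae_of_all _ fun ω => sub_nonneg.2 <| exp_le_one_iff.2 <| neg_nonpos.2 <|
      mul_nonneg hlam (hT0 ω))
    ((integrable_const 1).sub (integrable_exp_neg_mul hT hT0 hlam)) (1 - exp (-(lam * a)))
  rw [integral_sub (integrable_const 1) (integrable_exp_neg_mul hT hT0 hlam), integral_const,
    probReal_univ, one_smul] at hmarkov
  refine le_trans (mul_le_mul_of_nonneg_left (measureReal_mono fun ω hω => ?_) ?_) hmarkov
  · exact sub_le_sub_left (exp_le_exp.2 (neg_le_neg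
      (mul_le_mul_of_nonneg_left (le_of_lt hω) hlam))) 1
  · exact sub_nonneg.2 (exp_le_one_iff.2 (neg_nonpos.2 (mul_nonneg hlam ha)))

lemma exp_neg_div_four_mul_le_measureReal_le_div (hT : Measurable T) (hT0 : ∀ ω, 0 ≤ T ω)
    (hlam : 0 < lam) (hL : 1 ≤ L) (hlap : ∫ ω, exp (-(lam * T ω)) ∂P = exp (-x))
    (hx : x ≤ L / 4) :
    (1 - exp (-(3 / 4))) * exp (-(L / 4)) ≤ P.real {ω | T ω ≤ L / lam} := by
  have hchernoff := integral_exp_neg_mul_le_measureReal_le_add (P := P) (a := L / lam)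
    hT hT0 hlam.le
  rw [hlap, mul_div_cancel₀ L hlam.ne'] at hchernoff
  have hsplit : exp (-L) = exp (-(L / 4)) * exp (-(3 * L / 4)) := by
    rw [← exp_add]; ring_nf
  have h34 : exp (-(3 * L / 4)) ≤ exp (-(3 / 4)) := exp_le_exp.2 (by linarith)
  calc (1 - exp (-(3 / 4))) * exp (-(L / 4))
      ≤ exp (-(L / 4)) - exp (-(L / 4)) * exp (-(3 * L / 4)) := by
        nlinarith [exp_pos (-(L / 4))]
    _ ≤ exp (-x) - exp (-L) := by rw [← hsplit]; gcongr
    _ ≤ P.real {ω | T ω ≤ L / lam} := by linarith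

lemma measureReal_div_lt_le_two_mul (hT : Measurable T) (hT0 : ∀ ω, 0 ≤ T ω)
    (hlam : 0 < lam) (hL : 1 ≤ L) (hlap : ∫ ω, exp (-(lam * T ω)) ∂P = exp (-x)) :
    P.real {ω | L / lam < T ω} ≤ 2 * x := by
  have hmarkov := one_sub_exp_neg_mul_mul_measureReal_lt_le (P := P) (a := L / lam)
    hT hT0 hlam.le (div_nonneg (by linarith) hlam.le)
  rw [hlap, mul_div_cancel₀ L hlam.ne'] at hmarkov
  have hexpL : exp (-L) ≤ 1 / 2 := by
    rw [exp_neg, inv_le_comm₀ (exp_pos L) (by norm_num)]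
    linarith [exp_one_gt_two, exp_le_exp.2 hL]
  have hx := add_one_le_exp (-x)
  nlinarith [measureReal_nonneg (μ := P) (s := {ω | L / lam < T ω})]

end LaplaceTail

section LaplaceExponent

open Real

variable {Ω : Type*} [MeasurableSpace Ω] {P : Measure Ω} [IsProbabilityMeasure P]
  {S : ℝ → Ω → ℝ} {κ : ℝ → ℝ}

lemma laplaceExponent_zero
    (hS : ∀ lam r : ℝ, 0 ≤ lam → 0 ≤ r →
      ∫ ω, exp (-(lam * S r ω)) ∂P = exp (-(r * κ lam))) :
    κ 0 = 0 := by
  have h := hS 0 1 le_rfl zero_le_one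
  simp only [zero_mul, neg_zero, exp_zero, integral_const, probReal_univ, one_smul,
    one_mul] at h
  exact neg_eq_zero.1 ((exp_eq_one_iff _).1 h.symm)

lemma pos_of_laplaceExponent_pos
    (hS : ∀ lam r : ℝ, 0 ≤ lam → 0 ≤ r →
      ∫ ω, exp (-(lam * S r ω)) ∂P = exp (-(r * κ lam)))
    {lam : ℝ} (hlam : 0 ≤ lam) (hκ : 0 < κ lam) : 0 < lam := by
  refine hlam.lt_of_ne fun h => ?_
  rw [← h, laplaceExponent_zero hS] at hκ
  exact hκ.false

lemma tsum_measure_le_log_div_eq_top (hSm : ∀ r, Measurable (S r)) (hS0 : ∀ r ω, 0 ≤ S r ω)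
    (hS : ∀ lam r : ℝ, 0 ≤ lam → 0 ≤ r →
      ∫ ω, exp (-(lam * S r ω)) ∂P = exp (-(r * κ lam)))
    {s t lam : ℕ → ℝ} {M : ℝ} (hs : ∀ n, 0 ≤ s n) (hlam : ∀ n, 0 < lam n)
    (ht : ∀ n, exp 1 ≤ t n) (htM : ∀ n, 1 ≤ n → t n ≤ M * n ^ 2)
    (hsκ : ∀ n, s n * κ (lam n) ≤ log (t n) / 4) :
    ∑' n, P {ω | S (s n) ω ≤ log (t n) / lam n} = ⊤ := by
  have ht1 (n : ℕ) : 1 ≤ t n := (one_le_exp zero_le_one).trans (ht n)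
  have hM : 0 < M := by
    have := htM 1 le_rfl
    simp only [Nat.cast_one, one_pow, mul_one] at this
    linarith [ht1 1]
  set c := 1 - exp (-(3 / 4) : ℝ)
  have hc : 0 < c := sub_pos.2 (exp_lt_one_iff.2 (by norm_num))
  by_contra hfin
  refine not_summable_of_eventually_div_natCast_le (div_pos hc (sqrt_pos.2 hM)) ?_
    (ENNReal.summable_toReal hfin)
  filter_upwards [eventually_ge_atTop 1] with n hn
  have hn' : (0 : ℝ) < n := by exact_mod_cast hn
  calc c / √M / n = c * (√(M * n ^ 2))⁻¹ := by
        rw [sqrt_mul hM.le, sqrt_sq hn'.le, div_div, div_eq_mul_inv]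
    _ ≤ c * (√(t n))⁻¹ := by
        gcongr
        · exact sqrt_pos.2 (by linarith [ht1 n])
        · exact htM n hn
    _ ≤ c * exp (-(log (t n) / 4)) := by
        gcongr
        exact inv_sqrt_le_exp_neg_log_div_four (ht1 n)
    _ ≤ P.real {ω | S (s n) ω ≤ log (t n) / lam n} :=
        exp_neg_div_four_mul_le_measureReal_le_div (hSm _) (hS0 _) (hlam n)
          ((le_log_iff_exp_le ((exp_pos 1).trans_le (ht n))).2 (ht n)) (hS _ _ (hlam n).le (hs n))
          (hsκ n)

lemma tsum_measure_ne_top_of_eventually_measureReal_le {s : ℕ → Set Ω} {b : ℕ → ℝ}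
    (hb : Summable b) (h : ∀ᶠ n in atTop, P.real (s n) ≤ b n) : ∑' n, P (s n) ≠ ⊤ := by
  have hsum : Summable fun n => P.real (s n) :=
    Summable.of_norm_bounded_eventually_nat hb
      (h.mono fun n hn => by rwa [norm_of_nonneg measureReal_nonneg])
  rw [tsum_congr fun n => (ofReal_measureReal (measure_ne_top P (s n))).symm,
    ← ENNReal.ofReal_tsum_of_nonneg (fun _ => measureReal_nonneg) hsum]
  exact ENNReal.ofReal_ne_top

lemma ae_eventually_le_log_div (hSm : ∀ r, Measurable (S r)) (hS0 : ∀ r ω, 0 ≤ S r ω)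
    (hS : ∀ lam r : ℝ, 0 ≤ lam → 0 ≤ r →
      ∫ ω, exp (-(lam * S r ω)) ∂P = exp (-(r * κ lam)))
    {s t lam : ℕ → ℝ} {M : ℝ} (hs : ∀ n, 0 ≤ s n) (hlam : ∀ n, 0 < lam n)
    (ht : ∀ n, exp 1 ≤ t n) (htM : ∀ n, 1 ≤ n → t n ≤ M * n ^ 2)
    (hsκ : ∀ n, s n * κ (lam n) ≤ exp (-n) * log (t n) / 4) :
    ∀ᵐ ω ∂P, ∀ᶠ n in atTop, S (s n) ω ≤ log (t n) / lam n := by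
  have ht0 (n : ℕ) : 0 ≤ t n := (exp_pos 1).le.trans (ht n)
  have hfin : ∑' n, P {ω | log (t n) / lam n < S (s n) ω} ≠ ⊤ := by
    refine tsum_measure_ne_top_of_eventually_measureReal_le
      ((Real.summable_pow_mul_exp_neg_nat_mul 2 one_pos).mul_left M) ?_
    filter_upwards [eventually_ge_atTop 1] with n hn
    have hlog : 1 ≤ log (t n) := (le_log_iff_exp_le ((exp_pos 1).trans_le (ht n))).2 (ht n)
    calc P.real {ω | log (t n) / lam n < S (s n) ω} ≤ 2 * (s n * κ (lam n)) :=
          measureReal_div_lt_le_two_mul (hSm _) (hS0 _) (hlam n) hlog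
            (hS _ _ (hlam n).le (hs n))
      _ ≤ exp (-n) * t n := by
          nlinarith [hsκ n, log_le_self (ht0 n), exp_pos (-(n : ℝ))]
      _ ≤ M * (n ^ 2 * exp (-1 * n)) := by
          rw [neg_one_mul]
          nlinarith [htM n hn, exp_pos (-(n : ℝ))]
  filter_upwards [ae_eventually_notMem hfin] with ω hω
  exact hω.mono fun n hn => not_lt.1 hn

end LaplaceExponent

lemma phiInv_sq_pos_and_sqrt_psiDeriv_le {α β : ℝ} {π : Measure ℝ} {ψinv φinv : ℝ → ℝ}
    {Ω : Type*} [MeasurableSpace Ω] {P : Measure Ω} [IsProbabilityMeasure P] {S : ℝ → Ω → ℝ}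
    (hα : 0 ≤ α)
    (hφinv : ∀ x : ℝ, α ≤ x → 0 ≤ φinv x ∧ psiDeriv α β π (ψinv (φinv x)) = x)
    (hLaplace : ∀ lam r : ℝ, 0 ≤ lam → 0 ≤ r →
      ∫ ω, Real.exp (-(lam * S r ω)) ∂P
        = Real.exp (-(r * √(psiDeriv α β π (ψinv lam) - α))))
    {y : ℝ} (hy : 0 ≤ y) (hαy : α < y ^ 2) :
    0 < φinv (y ^ 2) ∧ √(psiDeriv α β π (ψinv (φinv (y ^ 2))) - α) ≤ y := by
  have hφy := hφinv _ hαy.le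
  have hκ : √(psiDeriv α β π (ψinv (φinv (y ^ 2))) - α) = √(y ^ 2 - α) := by rw [hφy.2]
  refine ⟨pos_of_laplaceExponent_pos
    (κ := fun lam => √(psiDeriv α β π (ψinv lam) - α)) hLaplace hφy.1 ?_, ?_⟩
  · simpa only [hκ] using Real.sqrt_pos.2 (sub_pos.2 hαy)
  · rw [hκ]
    exact (Real.sqrt_le_sqrt (by linarith)).trans_eq (Real.sqrt_sq hy)

theorem statement14_general (α β : ℝ) (π : Measure ℝ) (h : IsBranchingMechanism α β π)
    (ψinv φinv : ℝ → ℝ)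
    (hφinv : ∀ x : ℝ, α ≤ x → 0 ≤ φinv x ∧ psiDeriv α β π (ψinv (φinv x)) = x)
    {Ω : Type*} [MeasurableSpace Ω] (P : Measure Ω) [IsProbabilityMeasure P]
    (S : ℝ → Ω → ℝ)
    (hSmeas : ∀ r : ℝ, Measurable (S r))
    (hSnonneg : ∀ (r : ℝ) (ω : Ω), 0 ≤ S r ω)
    (hLaplace : ∀ lam r : ℝ, 0 ≤ lam → 0 ≤ r →
      (∫ ω, Real.exp (-(lam * S r ω)) ∂P)
        = Real.exp (-(r * Real.sqrt (psiDeriv α β π (ψinv lam) - α))))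
    (ρ : ℕ → ℝ)
    (hρmem : ∀ n : ℕ, ρ n ∈ Set.Ioo 0 (gaugeR0 α / 4))
    (hρdec : ∀ n : ℕ, ρ (n + 1) ≤ Real.exp (-(n : ℝ)) * ρ n)
    (hρlog : ∃ M : ℝ, ∀ n : ℕ, 1 ≤ n → ((n : ℝ))⁻¹ ^ 2 * Real.log (1 / ρ n) ≤ M) :
    (∑' n : ℕ, P {ω | S (ρ n) ω ≤ gaugeFun φinv (4 * ρ n)} = ⊤) ∧
    (∀ᵐ ω ∂P, ∃ M : ℝ, ∀ n : ℕ,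
      S (ρ (n + 1)) ω / gaugeFun φinv (4 * ρ n) ≤ M) := by
  obtain ⟨M, hM⟩ := hρlog
  have hρ (n : ℕ) : 0 < ρ n := (hρmem n).1
  have hr (n : ℕ) : 0 < 4 * ρ n := by linarith [hρ n]
  have hrα (n : ℕ) : 4 * ρ n < gaugeR0 α := by linarith [(hρmem n).2]
  have ht (n : ℕ) : Real.exp 1 ≤ Real.log (1 / (4 * ρ n)) :=
    (exp_one_lt_log_one_div (hr n) ((hrα n).trans_le (gaugeR0_le_exp_neg_exp α))).le
  have hL (n : ℕ) : 1 ≤ Real.log (Real.log (1 / (4 * ρ n))) :=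
    (Real.le_log_iff_exp_le ((Real.exp_pos 1).trans_le (ht n))).2 (ht n)
  have htM (n : ℕ) (hn : 1 ≤ n) : Real.log (1 / (4 * ρ n)) ≤ M * n ^ 2 :=
    log_one_div_four_mul_le (hρ n) hn (hM n hn)
  have hgauge (n : ℕ) := phiInv_sq_pos_and_sqrt_psiDeriv_le h.alpha_nonneg hφinv hLaplace
    (mul_nonneg (by positivity [hρ n]) (zero_le_one.trans (hL n)))
    (lt_sq_of_lt_gaugeR0 h.alpha_nonneg (hr n) (hrα n) (hL n))
  have hsκ (c s : ℝ) (n : ℕ) (hc : 0 ≤ c) (hs : s ≤ c * ρ n) :=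
    mul_le_div_four_of_le_mul_of_le_one_div_four_mul (hρ n) hc (Real.sqrt_nonneg _) hs
      (hgauge n).2
  refine ⟨tsum_measure_le_log_div_eq_top hSmeas hSnonneg hLaplace (fun n => (hρ n).le)
    (fun n => (hgauge n).1) ht htM fun n => by simpa using hsκ 1 _ n zero_le_one (one_mul _).ge,
    ?_⟩
  filter_upwards [ae_eventually_le_log_div hSmeas hSnonneg hLaplace (fun n => (hρ (n + 1)).le)
    (fun n => (hgauge n).1) ht htM fun n => hsκ _ _ n (Real.exp_pos _).le (hρdec n)] with ω hω
  exact exists_forall_div_le_of_eventually_le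
    (fun n => div_nonneg (zero_le_one.trans (hL n)) (hgauge n).1.le) hω

/-- if δ > 1, (S_r) is a subordinator-like family with Laplace
exponent Φ = (ψ′∘ψ^{−1} − α)^{1/2}, and (ρ_n) satisfies ρ_n ∈ (0, r₀/4),
ρ_{n+1} ≤ e^{−n}ρ_n and sup_{n≥1} n^{−2} log(1/ρ_n) < ∞, then
Σ_n P(S_{ρ_n} ≤ g(4ρ_n)) = ∞ and P-a.s. limsup_n S_{ρ_{n+1}}/g(4ρ_n) < ∞. -/
theorem statement14 (α β : ℝ) (π : Measure ℝ) (h : IsBranchingMechanism α β π)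
    (hδ : 1 < deltaIndex (psiFun α β π))
    (ψinv φinv : ℝ → ℝ)
    (hψinv : ∀ x : ℝ, 0 ≤ x → 0 ≤ ψinv x ∧ psiFun α β π (ψinv x) = x)
    (hψinv' : ∀ y : ℝ, 0 ≤ y → ψinv (psiFun α β π y) = y)
    (hφinv : ∀ x : ℝ, α ≤ x → 0 ≤ φinv x ∧ psiDeriv α β π (ψinv (φinv x)) = x)
    (hφinv' : ∀ y : ℝ, 0 ≤ y → φinv (psiDeriv α β π (ψinv y)) = y)
    {Ω : Type*} [MeasurableSpace Ω] (P : Measure Ω) [IsProbabilityMeasure P]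
    (S : ℝ → Ω → ℝ)
    (hSmeas : ∀ r : ℝ, Measurable (S r))
    (hSnonneg : ∀ (r : ℝ) (ω : Ω), 0 ≤ S r ω)
    (hLaplace : ∀ lam r : ℝ, 0 ≤ lam → 0 ≤ r →
      (∫ ω, Real.exp (-(lam * S r ω)) ∂P)
        = Real.exp (-(r * Real.sqrt (psiDeriv α β π (ψinv lam) - α))))
    (ρ : ℕ → ℝ)
    (hρmem : ∀ n : ℕ, ρ n ∈ Set.Ioo 0 (gaugeR0 α / 4))
    (hρdec : ∀ n : ℕ, ρ (n + 1) ≤ Real.exp (-(n : ℝ)) * ρ n)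
    (hρlog : ∃ M : ℝ, ∀ n : ℕ, 1 ≤ n → ((n : ℝ))⁻¹ ^ 2 * Real.log (1 / ρ n) ≤ M) :
    (∑' n : ℕ, P {ω | S (ρ n) ω ≤ gaugeFun φinv (4 * ρ n)} = ⊤) ∧
    (∀ᵐ ω ∂P, ∃ M : ℝ, ∀ n : ℕ,
      S (ρ (n + 1)) ω / gaugeFun φinv (4 * ρ n) ≤ M) :=
  statement14_general α β π h ψinv φinv hφinv P S hSmeas hSnonneg hLaplace ρ hρmem hρdec hρlog
end
end
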